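/- arXiv:1201.0295 — 7 statements merged into one kernel-verified Lean document; each statement's English description precedes it below -/
import Mathlib

section
/- For all natural numbers n ≥ 2 and r with 1 ≤ r ≤ n-1, f(n,r) = f(n,n-r), where f(n,r) = 1 + ∑_{k=1}^{r} ∑_{h=k+1}^{k+n-r} C(n,h)·C(h,k) and C(a,b) denotes the binomial coefficient 'a choose b'. -/
def f (n r : ℕ) : ℕ :=
  1 + ∑ k ∈ Finset.Icc 1 r, ∑ h ∈ Finset.Icc (k + 1) (k + n - r), Nat.choose n h * Nat.choose h k

/-!
Substituting `h = k + j` turns the inner sum of `f n r` into a sum over `1 ≤ j ≤ n - r`, and the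
summand `C(n, k + j) · C(k + j, k)` is symmetric in `k` and `j` because `C(k + j, k) = C(k + j, j)`.
Swapping the two sums therefore exchanges the roles of `r` and `n - r`.
-/

open Finset

lemma f_eq_sum_choose_add (n r : ℕ) (hr : r ≤ n) :
    f n r = 1 + ∑ k ∈ Icc 1 r, ∑ j ∈ Icc 1 (n - r), n.choose (k + j) * (k + j).choose k := by
  unfold f
  congr 1
  refine sum_congr rfl fun k _ => ?_
  rw [Nat.add_sub_assoc hr, ← map_add_left_Icc, sum_map]
  rfl

theorem f_symm_general (n r : ℕ) (hr2 : r ≤ n - 1) :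
    f n r = f n (n - r) := by
  have hr : r ≤ n := by omega
  rw [f_eq_sum_choose_add n r hr, f_eq_sum_choose_add n (n - r) (Nat.sub_le n r),
    Nat.sub_sub_self hr, sum_comm]
  congr 1
  refine sum_congr rfl fun j _ => sum_congr rfl fun k _ => ?_
  rw [add_comm k j, Nat.choose_symm_add]

theorem f_symm (n r : ℕ) (hn : 2 ≤ n) (hr1 : 1 ≤ r) (hr2 : r ≤ n - 1) :
    f n r = f n (n - r) :=
  f_symm_general n r hr2
end

section
/- For natural numbers n and r with n ≥ 2 and 1 ≤ r < ⌊n/2⌋, f(n,r+1) > f(n,r), where f(n,r) = 1 + ∑_{k=1}^{r} ∑_{h=k+1}^{k+n-r} C(n,h)·C(h,k). -/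
open Finset

lemma sum_Icc_choose_eq (m : ℕ) : ∑ j ∈ Icc 1 m, Nat.choose m j = 2 ^ m - 1 := by
  rw [← Finset.Ico_add_one_right_eq_Icc, Finset.sum_Ico_eq_sum_range]
  have h := Nat.sum_range_choose m
  rw [Finset.sum_range_succ' (fun i => Nat.choose m i)] at h
  simp only [Nat.choose_zero_right] at h
  calc ∑ i ∈ range m, Nat.choose m (1 + i) = ∑ i ∈ range m, Nat.choose m (i + 1) := by
        exact Finset.sum_congr rfl fun i _ => by rw [Nat.add_comm]
    _ = 2 ^ m - 1 := by omega

lemma lemA (n r : ℕ) (hr1 : 1 ≤ r) (hrn : 2 * r + 2 ≤ n) :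
    ∑ k ∈ Icc 1 r, Nat.choose n (k + n - r) * Nat.choose (k + n - r) k
      = Nat.choose n r * (2 ^ r - 1) := by
  have hterm : ∀ k ∈ Icc 1 r,
      Nat.choose n (k + n - r) * Nat.choose (k + n - r) k
        = Nat.choose n r * Nat.choose r k := by
    intro k hk
    rw [Finset.mem_Icc] at hk
    have hk1 : 1 ≤ k := hk.1
    have hk2 : k ≤ r := hk.2
    have h1 : k + n - r ≤ n := by omega
    have h2 : k ≤ k + n - r := by omega
    rw [Nat.choose_mul h2]
    have h3 : k + n - r - k = n - r := by omega
    rw [h3]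
    have h4 : Nat.choose (n - k) (n - r) = Nat.choose (n - k) (r - k) :=
      Nat.choose_symm_of_eq_add (by omega)
    rw [h4, ← Nat.choose_mul (n := n) hk2]
  rw [Finset.sum_congr rfl hterm, ← Finset.mul_sum, sum_Icc_choose_eq]

lemma lemB (n r : ℕ) (hrn : 2 * r + 2 ≤ n) :
    ∑ h ∈ Icc (r + 2) n, Nat.choose n h * Nat.choose h (r + 1)
      = Nat.choose n (r + 1) * (2 ^ (n - r - 1) - 1) := by
  have hterm : ∀ h ∈ Icc (r + 2) n,
      Nat.choose n h * Nat.choose h (r + 1)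
        = Nat.choose n (r + 1) * Nat.choose (n - (r + 1)) (h - (r + 1)) := by
    intro h hh
    rw [Finset.mem_Icc] at hh
    exact Nat.choose_mul (by omega)
  rw [Finset.sum_congr rfl hterm, ← Finset.mul_sum]
  congr 1
  rw [show Icc (r + 2) n = Icc ((r + 1) + 1) ((r + 1) + (n - r - 1)) by congr 1 <;> omega,
    ← Finset.map_add_left_Icc, Finset.sum_map]
  simp only [addLeftEmbedding_apply, Nat.add_sub_cancel_left]
  rw [show n - (r + 1) = n - r - 1 by omega]
  exact sum_Icc_choose_eq _

theorem f_mono (n r : ℕ) (hn : 2 ≤ n) (hr1 : 1 ≤ r) (hr2 : r < n / 2) :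
    f n r < f n (r + 1) := by
  have hrn : 2 * r + 2 ≤ n := by
    have h1 : (r + 1) * 2 ≤ n := (Nat.le_div_iff_mul_le (by norm_num)).mp hr2
    omega
  unfold f
  -- rewrite f n r : split off top element of each inner sum
  have hfr : ∀ k ∈ Icc 1 r,
      ∑ h ∈ Icc (k + 1) (k + n - r), Nat.choose n h * Nat.choose h k
        = (∑ h ∈ Icc (k + 1) (k + n - (r + 1)), Nat.choose n h * Nat.choose h k)
          + Nat.choose n (k + n - r) * Nat.choose (k + n - r) k := by
    intro k hk
    rw [Finset.mem_Icc] at hk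
    have he : k + n - r = (k + n - (r + 1)) + 1 := by omega
    rw [he]
    exact Finset.sum_Icc_succ_top (by omega) _
  rw [Finset.sum_congr rfl hfr, Finset.sum_add_distrib]
  -- rewrite f n (r+1) : split off top element (k = r+1) of outer sum
  rw [Finset.sum_Icc_succ_top (by omega : 1 ≤ r + 1)]
  rw [show r + 1 + n - (r + 1) = n by omega]
  rw [show r + 1 + 1 = r + 2 by omega]
  rw [lemA n r hr1 hrn, lemB n r hrn]
  have h1 : Nat.choose n r ≤ Nat.choose n (r + 1) :=
    Nat.choose_le_succ_of_lt_half_left hr2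
  have h2 : 2 ^ r - 1 < 2 ^ (n - r - 1) - 1 := by
    have : (2 : ℕ) ^ r < 2 ^ (n - r - 1) :=
      Nat.pow_lt_pow_right (by norm_num) (by omega)
    have h3 : 1 ≤ 2 ^ r := Nat.one_le_two_pow
    omega
  have hpos : 0 < Nat.choose n (r + 1) := Nat.choose_pos (by omega)
  have key : Nat.choose n r * (2 ^ r - 1) < Nat.choose n (r + 1) * (2 ^ (n - r - 1) - 1) :=
    lt_of_le_of_lt (Nat.mul_le_mul_right _ h1) ((Nat.mul_lt_mul_left hpos).mpr h2)
  omega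
end

section
/- For natural numbers n, r, k with 1 ≤ k ≤ r and n > 2r+1, the binomial coefficient C(k+n-r, r+1) is strictly greater than C(k+n-r, k). -/
/-!
`Nat.choose m` is strictly increasing on `[0, m / 2]` and symmetric under `j ↦ m - j`, so
`choose m k < choose m j` as soon as `k` is smaller than both `j` and `m - j`. With
`m = k + n - r` and `j = r + 1` this holds because `k ≤ r` and `n > 2 r + 1`.
-/

namespace Nat

theorem choose_lt_succ_of_two_mul_add_one_lt {n r : ℕ} (h : 2 * r + 1 < n) :
    choose n r < choose n (r + 1) := by
  have hpos : 0 < choose n r := choose_pos (by omega)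
  refine Nat.lt_of_mul_lt_mul_right (a := r + 1) ?_
  calc choose n r * (r + 1) < choose n r * (n - r) :=
        Nat.mul_lt_mul_of_pos_left (by omega) hpos
    _ = choose n (r + 1) * (r + 1) := (choose_succ_right_eq n r).symm

theorem choose_strictMonoOn (n : ℕ) : StrictMonoOn (choose n) (Set.Iic (n / 2)) :=
  strictMonoOn_Iic_of_lt_succ fun r hr =>
    choose_lt_succ_of_two_mul_add_one_lt (by omega)

theorem choose_lt_choose_of_lt_of_lt_sub {n k j : ℕ} (hkj : k < j) (hk : k < n - j) :
    choose n k < choose n j := by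
  rcases le_or_gt j (n / 2) with hj | hj
  · exact choose_strictMonoOn n (Set.mem_Iic.2 (by omega)) hj hkj
  · rw [← choose_symm (by omega : j ≤ n)]
    exact choose_strictMonoOn n (Set.mem_Iic.2 (by omega))
      (Set.mem_Iic.2 (by omega)) hk

end Nat

theorem choose_lt_general (n r k : ℕ) (hkr : k ≤ r) (hn : 2 * r + 1 < n) :
    Nat.choose (k + n - r) k < Nat.choose (k + n - r) (r + 1) :=
  Nat.choose_lt_choose_of_lt_of_lt_sub (by omega) (by omega)

theorem choose_lt (n r k : ℕ) (hk1 : 1 ≤ k) (hkr : k ≤ r) (hn : 2 * r + 1 < n) :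
    Nat.choose (k + n - r) k < Nat.choose (k + n - r) (r + 1) :=
  choose_lt_general n r k hkr hn
end

section
/- For all n ≥ 4, f(n,3) = n·2^{n-1} − (n² + n) + (n(n-1)(n+4)/6)·(2^{n-3} − 1) + 1, where f(n,r) = 1 + ∑_{k=1}^{r} ∑_{h=k+1}^{k+n-r} C(n,h)·C(h,k). -/
/-!
Since `C(n,h) C(h,k) = C(n,k) C(n-k,h-k)`, the full sum `∑_h C(n,h) C(h,k)` is `C(n,k) 2^(n-k)`.
For `r = 3` the `k`-th inner sum of `f n 3` misses from it only the term `h = k` and the terms with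
`h > k + n - 3`, which are at most two explicit binomial values. Adding up, the `k = 2` and `k = 3`
contributions combine through `2 C(n,2) + C(n,3) = n(n-1)(n+4)/6`.
-/

open Finset

theorem sum_Icc_choose_mul_choose (n k : ℕ) :
    ∑ h ∈ Icc k n, n.choose h * h.choose k = n.choose k * 2 ^ (n - k) := by
  rcases lt_or_ge n k with hnk | hkn
  · simp [Icc_eq_empty_of_lt hnk, Nat.choose_eq_zero_of_lt hnk]
  rw [← Ico_add_one_right_eq_Icc, sum_Ico_eq_sum_range, Nat.sub_add_comm hkn,
    ← Nat.sum_range_choose, mul_sum]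
  refine sum_congr rfl fun j _ => ?_
  rw [Nat.choose_mul (n := n) (Nat.le_add_right k j), Nat.add_sub_cancel_left]

theorem sum_Ioc_choose_mul_choose_add_choose (n k : ℕ) :
    ∑ h ∈ Ioc k n, n.choose h * h.choose k + n.choose k = n.choose k * 2 ^ (n - k) := by
  rcases lt_or_ge n k with hnk | hkn
  · simp [Ioc_eq_empty_of_le hnk.le, Nat.choose_eq_zero_of_lt hnk]
  simpa using (sum_Ioc_add_eq_sum_Icc hkn).trans (sum_Icc_choose_mul_choose n k)

theorem two_mul_choose_two_add_choose_three (n : ℕ) :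
    2 * n.choose 2 + n.choose 3 = n * (n - 1) * (n + 4) / 6 := by
  symm
  apply Nat.div_eq_of_eq_mul_left (by norm_num)
  obtain _ | _ | m := n
  · rfl
  · rfl
  have h2 := Nat.choose_succ_right_eq (m + 2) 1
  have h3 := Nat.choose_succ_right_eq (m + 2) 2
  norm_num at h2 h3 ⊢
  nlinarith

-- With `n = m + 4` the upper limits `k + n - 3` of `f n 3` involve no truncated subtraction.
theorem f_add_four_three (m : ℕ) :
    f (m + 4) 3 = 1 + ∑ h ∈ Icc 2 (m + 2), (m + 4).choose h * h.choose 1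
      + ∑ h ∈ Icc 3 (m + 3), (m + 4).choose h * h.choose 2
      + ∑ h ∈ Icc 4 (m + 4), (m + 4).choose h * h.choose 3 := by
  rw [f, show Icc 1 3 = {1, 2, 3} from rfl, sum_insert (by decide), sum_insert (by decide),
    sum_singleton, show 1 + (m + 4) - 3 = m + 2 by omega, show 2 + (m + 4) - 3 = m + 3 by omega,
    show 3 + (m + 4) - 3 = m + 4 by omega, add_assoc, add_assoc]

theorem sum_Icc_choose_mul_choose_one_add (m : ℕ) :
    ∑ h ∈ Icc 2 (m + 2), (m + 4).choose h * h.choose 1 + ((m + 4) ^ 2 + (m + 4))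
      = (m + 4) * 2 ^ (m + 3) := by
  have h := sum_Ioc_choose_mul_choose_add_choose (m + 4) 1
  rw [← Icc_add_one_left_eq_Ioc, sum_Icc_succ_top (by omega), sum_Icc_succ_top (by omega)] at h
  simp only [Nat.reduceAdd, Nat.choose_succ_self_right, Nat.choose_self,
    Nat.choose_one_right (m + 3), Nat.choose_one_right (m + 4)] at h
  rw [show m + 4 - 1 = m + 3 from rfl] at h
  linarith

theorem sum_Icc_choose_mul_choose_two_add (m : ℕ) :
    ∑ h ∈ Icc 3 (m + 3), (m + 4).choose h * h.choose 2 + 2 * (m + 4).choose 2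
      = (m + 4).choose 2 * 2 ^ (m + 2) := by
  have h := sum_Ioc_choose_mul_choose_add_choose (m + 4) 2
  rw [← Icc_add_one_left_eq_Ioc, sum_Icc_succ_top (by omega)] at h
  simp only [Nat.reduceAdd, Nat.choose_self] at h
  rw [show m + 4 - 2 = m + 2 from rfl] at h
  linarith

theorem sum_Icc_choose_mul_choose_three_add (m : ℕ) :
    ∑ h ∈ Icc 4 (m + 4), (m + 4).choose h * h.choose 3 + (m + 4).choose 3
      = (m + 4).choose 3 * 2 ^ (m + 1) :=
  sum_Ioc_choose_mul_choose_add_choose (m + 4) 3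

theorem f_three (n : ℕ) (hn : 4 ≤ n) :
    f n 3 = n * 2 ^ (n - 1) - (n ^ 2 + n) + (n * (n - 1) * (n + 4) / 6) * (2 ^ (n - 3) - 1) + 1 := by
  obtain ⟨m, rfl⟩ := Nat.exists_eq_add_of_le' hn
  have h1 := sum_Icc_choose_mul_choose_one_add m
  have h2 := sum_Icc_choose_mul_choose_two_add m
  have h3 := sum_Icc_choose_mul_choose_three_add m
  have hle : (m + 4) ^ 2 + (m + 4) ≤ (m + 4) * 2 ^ (m + 3) := h1 ▸ Nat.le_add_left _ _
  rw [f_add_four_three, ← two_mul_choose_two_add_choose_three,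
    show m + 4 - 1 = m + 3 from rfl, show m + 4 - 3 = m + 1 from rfl]
  zify [hle, Nat.one_le_two_pow] at h1 h2 h3 ⊢
  linear_combination h1 + h2 + h3
end

section
/- Let L be a regular language with n distinct quotients K₀,…,K_{n−1}, and let A = K₀ ∩ ⋯ ∩ K_{n−1} be its atom with zero complemented quotients. Then for every word w, the quotient w⁻¹A is an intersection of a non-empty subset of {K₀,…,K_{n−1}}; consequently A has at most 2^n − 1 distinct quotients. -/
/-!
Quotients commute with intersections, so `w⁻¹(K₀ ∩ ⋯ ∩ Kₙ₋₁) = ⋂ᵢ w⁻¹Kᵢ`, and closure of the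
family under quotients makes each `w⁻¹Kᵢ` some `Kⱼ`: the quotient is the intersection over the
(non-empty) image of the map `i ↦ j`. There are only `2 ^ n - 1` non-empty index sets.
-/

def leftQuot {α : Type*} (w : List α) (L : Set (List α)) : Set (List α) := {x | w ++ x ∈ L}

theorem leftQuot_iInter {α ι : Type*} (w : List α) (S : ι → Set (List α)) :
    leftQuot w (⋂ i, S i) = ⋂ i, leftQuot w (S i) := by
  ext x
  simp [leftQuot]

theorem exists_leftQuot_iInter_eq_biInter {α ι : Type*} [Fintype ι] [DecidableEq ι]
    [Nonempty ι] (K : ι → Set (List α)) (w : List α)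
    (hclosed : ∀ i, ∃ j, leftQuot w (K i) = K j) :
    ∃ T : Finset ι, T.Nonempty ∧ leftQuot w (⋂ i, K i) = ⋂ i ∈ T, K i := by
  choose f hf using hclosed
  refine ⟨Finset.univ.image f, Finset.univ_nonempty.image f, ?_⟩
  rw [leftQuot_iInter, Finset.set_biInter_finset_image]
  simp [hf]

theorem ncard_setOf_finset_nonempty (ι : Type*) [Fintype ι] :
    {T : Finset ι | T.Nonempty}.ncard = 2 ^ Fintype.card ι - 1 := by
  have h : {T : Finset ι | T.Nonempty} = Set.univ \ {∅} := by
    ext T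
    simp [Finset.nonempty_iff_ne_empty]
  rw [h, Set.ncard_sdiff_singleton_of_mem (Set.mem_univ _), Set.ncard_univ,
    Nat.card_eq_fintype_card, Fintype.card_finset]

theorem finite_and_ncard_le_of_subset_nonempty_biInter {β ι : Type*} [Fintype ι]
    (K : ι → Set β) (S : Set (Set β))
    (hS : ∀ M ∈ S, ∃ T : Finset ι, T.Nonempty ∧ M = ⋂ i ∈ T, K i) :
    S.Finite ∧ S.ncard ≤ 2 ^ Fintype.card ι - 1 := by
  set F : Set (Set β) := (fun T : Finset ι => ⋂ i ∈ T, K i) '' {T | T.Nonempty}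
  have hsub : S ⊆ F := fun M hM => by
    obtain ⟨T, hT, rfl⟩ := hS M hM
    exact ⟨T, hT, rfl⟩
  have hF : F.Finite := (Set.toFinite _).image _
  refine ⟨hF.subset hsub, ?_⟩
  calc S.ncard ≤ F.ncard := Set.ncard_le_ncard hsub hF
    _ ≤ {T : Finset ι | T.Nonempty}.ncard := Set.ncard_image_le (Set.toFinite _)
    _ = 2 ^ Fintype.card ι - 1 := ncard_setOf_finset_nonempty ι

theorem atom_no_complement_bound_general {α : Type*} (n : ℕ) (hn : 1 ≤ n)
    (K : Fin n → Set (List α))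
    (hclosed : ∀ (w : List α) (i : Fin n), ∃ j, leftQuot w (K i) = K j)
    (A : Set (List α)) (hA : A = ⋂ i, K i) :
    (∀ w : List α, ∃ T : Finset (Fin n), T.Nonempty ∧ leftQuot w A = ⋂ i ∈ T, K i) ∧
      {M : Set (List α) | ∃ w : List α, M = leftQuot w A}.Finite ∧
      {M : Set (List α) | ∃ w : List α, M = leftQuot w A}.ncard ≤ 2 ^ n - 1 := by
  subst hA
  have : Nonempty (Fin n) := ⟨⟨0, hn⟩⟩
  have hquot (w : List α) : ∃ T : Finset (Fin n), T.Nonempty ∧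
      leftQuot w (⋂ i, K i) = ⋂ i ∈ T, K i :=
    exists_leftQuot_iInter_eq_biInter K w (hclosed w)
  obtain ⟨hfin, hcard⟩ := finite_and_ncard_le_of_subset_nonempty_biInter K
    {M | ∃ w : List α, M = leftQuot w (⋂ i, K i)} (by rintro M ⟨w, rfl⟩; exact hquot w)
  exact ⟨hquot, hfin, by simpa using hcard⟩

theorem atom_no_complement_bound {α : Type*} (L : Set (List α)) (n : ℕ) (hn : 1 ≤ n)
    (K : Fin n → Set (List α))
    (hInj : Function.Injective K)
    (hquot : ∀ i, ∃ w, K i = leftQuot w L)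
    (hall : ∀ w : List α, ∃ i, leftQuot w L = K i)
    (hclosed : ∀ (w : List α) (i : Fin n), ∃ j, leftQuot w (K i) = K j)
    (A : Set (List α)) (hA : A = ⋂ i, K i) :
    (∀ w : List α, ∃ T : Finset (Fin n), T.Nonempty ∧ leftQuot w A = ⋂ i ∈ T, K i) ∧
      {M : Set (List α) | ∃ w : List α, M = leftQuot w A}.Finite ∧
      {M : Set (List α) | ∃ w : List α, M = leftQuot w A}.ncard ≤ 2 ^ n - 1 :=
  atom_no_complement_bound_general n hn K hclosed A hA
end

section
/- Let L be a regular language with n ≥ 2 distinct quotients and let A be an atom of L with r complemented quotients, 1 ≤ r ≤ n−1. Then the quotient complexity of A is at most f(n,r) = 1 + ∑_{k=1}^{r} ∑_{h=k+1}^{k+n-r} C(n,h)·C(h,k). -/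
/-!
A quotient `w⁻¹A` of the atom `A = ⋂_{i ∈ S} Kᵢ ∩ ⋂_{i ∉ S} Kᵢᶜ` is again an intersection of
quotients and complemented quotients, indexed by the images `σ(S)` and `σ(Sᶜ)` under the map
`σ` with `w⁻¹Kᵢ = K_{σ i}`. So `w⁻¹A` is empty or is determined by a pair of disjoint non-empty
index sets `X`, `Y` with `|X| ≤ n - r` and `|Y| ≤ r`. Such a pair is recovered from
`(X ∪ Y, Y)`, and with `|Y| = k`, `|X ∪ Y| = h` there are at most `C(n,h)·C(h,k)` of those.
-/

open Finset

section SignedInter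

variable {ι β : Type*}

def signedInter (K : ι → Set β) (X Y : Finset ι) : Set β :=
  (⋂ i ∈ X, K i) ∩ ⋂ i ∈ Y, (K i)ᶜ

lemma disjoint_of_signedInter_nonempty {K : ι → Set β} {X Y : Finset ι}
    (h : (signedInter K X Y).Nonempty) : Disjoint X Y := by
  obtain ⟨x, hX, hY⟩ := h
  rw [Finset.disjoint_left]
  intro i hiX hiY
  exact Set.mem_iInter₂.mp hY i hiY (Set.mem_iInter₂.mp hX i hiX)

lemma leftQuot_signedInter [DecidableEq ι] {α : Type*} {K : ι → Set (List α)} {w : List α}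
    {σ : ι → ι} (hσ : ∀ i, leftQuot w (K i) = K (σ i)) (X Y : Finset ι) :
    leftQuot w (signedInter K X Y) = signedInter K (X.image σ) (Y.image σ) := by
  have hpre : ∀ i, (w ++ ·) ⁻¹' K i = K (σ i) := hσ
  change (w ++ ·) ⁻¹' _ = _
  simp only [signedInter, Set.preimage_inter, Set.preimage_iInter₂, Set.preimage_compl, hpre,
    set_biInter_finset_image]

end SignedInter

section Counting

variable (ι : Type*) [Fintype ι] [DecidableEq ι]

def disjointPairs (m r : ℕ) : Finset (Finset ι × Finset ι) :=
  univ.filter fun p => p.1.Nonempty ∧ p.2.Nonempty ∧ Disjoint p.1 p.2 ∧ #p.1 ≤ m ∧ #p.2 ≤ r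

def sdiffPairs (k h : ℕ) : Finset (Finset ι × Finset ι) :=
  (univ.powersetCard h).biUnion fun Z => (Z.powersetCard k).image fun Y => (Z \ Y, Y)

lemma card_sdiffPairs_le (k h : ℕ) :
    #(sdiffPairs ι k h) ≤ (Fintype.card ι).choose h * h.choose k := by
  rw [← card_univ, ← card_powersetCard]
  refine card_biUnion_le_card_mul _ _ _ fun Z hZ => card_image_le.trans ?_
  rw [card_powersetCard, mem_powersetCard_univ.mp hZ]

lemma disjointPairs_subset_biUnion_sdiffPairs (m r : ℕ) :
    disjointPairs ι m r ⊆
      (Icc 1 r).biUnion fun k => (Icc (k + 1) (k + m)).biUnion (sdiffPairs ι k) := by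
  rintro ⟨X, Y⟩ hp
  simp only [disjointPairs, mem_filter, mem_univ, true_and] at hp
  obtain ⟨hX, hY, hXY, hXm, hYr⟩ := hp
  have hcard : #(X ∪ Y) = #X + #Y := card_union_of_disjoint hXY
  have hXpos := hX.card_pos
  simp only [sdiffPairs, mem_biUnion, mem_Icc, mem_image, mem_powersetCard]
  exact ⟨#Y, ⟨hY.card_pos, hYr⟩, #(X ∪ Y), ⟨by omega, by omega⟩, X ∪ Y, ⟨subset_univ _, rfl⟩, Y,
    ⟨subset_union_right, rfl⟩, by rw [union_sdiff_cancel_right hXY]⟩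

lemma card_disjointPairs_le (m r : ℕ) :
    #(disjointPairs ι m r) ≤
      ∑ k ∈ Icc 1 r, ∑ h ∈ Icc (k + 1) (k + m), (Fintype.card ι).choose h * h.choose k :=
  calc #(disjointPairs ι m r)
      _ ≤ #((Icc 1 r).biUnion fun k => (Icc (k + 1) (k + m)).biUnion (sdiffPairs ι k)) :=
        card_le_card (disjointPairs_subset_biUnion_sdiffPairs ι m r)
      _ ≤ ∑ k ∈ Icc 1 r, ∑ h ∈ Icc (k + 1) (k + m), #(sdiffPairs ι k h) :=
        card_biUnion_le.trans (sum_le_sum fun _ _ => card_biUnion_le)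
      _ ≤ _ := sum_le_sum fun k _ => sum_le_sum fun h _ => card_sdiffPairs_le ι k h

lemma card_disjointPairs_add_one_le_f {n r : ℕ} (hr : r ≤ n) :
    #(disjointPairs (Fin n) (n - r) r) + 1 ≤ f n r := by
  have h := card_disjointPairs_le (Fin n) (n - r) r
  simp only [Fintype.card_fin, ← Nat.add_sub_assoc hr] at h
  rw [f]
  omega

end Counting

lemma leftQuot_signedInter_mem {ι α : Type*} [Fintype ι] [DecidableEq ι] {K : ι → Set (List α)}
    (hclosed : ∀ (w : List α) (i : ι), ∃ j, leftQuot w (K i) = K j) {S T : Finset ι} {m r : ℕ}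
    (hS : S.Nonempty) (hT : T.Nonempty) (hSm : #S ≤ m) (hTr : #T ≤ r) (w : List α) :
    leftQuot w (signedInter K S T) ∈
      insert ∅ (Function.uncurry (signedInter K) '' ↑(disjointPairs ι m r)) := by
  choose σ hσ using hclosed w
  rw [leftQuot_signedInter hσ]
  rcases (signedInter K (S.image σ) (T.image σ)).eq_empty_or_nonempty with hempty | hne
  · exact Or.inl hempty
  refine Or.inr ⟨(S.image σ, T.image σ), ?_, rfl⟩
  simp only [disjointPairs, coe_filter, mem_univ, true_and, image_nonempty, Set.mem_ofPred_eq]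
  exact ⟨hS, hT, disjoint_of_signedInter_nonempty hne, card_image_le.trans hSm,
    card_image_le.trans hTr⟩

theorem atom_complexity_upper_bound_general {α : Type*} (n r : ℕ)
    (hr1 : 1 ≤ r) (hr2 : r ≤ n - 1)
    (K : Fin n → Set (List α))
    (hclosed : ∀ (w : List α) (i : Fin n), ∃ j, leftQuot w (K i) = K j)
    (S : Finset (Fin n)) (hS : S.card = n - r)
    (A : Set (List α))
    (hA : A = (⋂ i ∈ S, K i) ∩ ⋂ i ∈ Sᶜ, (K i)ᶜ) :
    {M : Set (List α) | ∃ w : List α, M = leftQuot w A}.Finite ∧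
      {M : Set (List α) | ∃ w : List α, M = leftQuot w A}.ncard ≤ f n r := by
  set P := disjointPairs (Fin n) (n - r) r
  have hSc : #Sᶜ = r := by rw [card_compl, Fintype.card_fin, hS]; omega
  have hquots : {M | ∃ w, M = leftQuot w A} ⊆
      insert ∅ (Function.uncurry (signedInter K) '' ↑P) := by
    rintro M ⟨w, rfl⟩
    exact hA ▸ leftQuot_signedInter_mem hclosed (card_pos.mp (by omega))
      (card_pos.mp (by omega)) hS.le hSc.le w
  have hfin : (insert ∅ (Function.uncurry (signedInter K) '' ↑P)).Finite :=
    ((finite_toSet P).image _).insert ∅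
  refine ⟨hfin.subset hquots, ?_⟩
  calc _ ≤ (insert ∅ (Function.uncurry (signedInter K) '' ↑P)).ncard :=
        Set.ncard_le_ncard hquots hfin
    _ ≤ #P + 1 := (Set.ncard_insert_le _ _).trans (Nat.add_le_add_right
        ((Set.ncard_image_le (finite_toSet P)).trans_eq (Set.ncard_coe_finset P)) 1)
    _ ≤ f n r := card_disjointPairs_add_one_le_f (by omega)

theorem atom_complexity_upper_bound {α : Type*} (L : Set (List α)) (n r : ℕ)
    (hn : 2 ≤ n) (hr1 : 1 ≤ r) (hr2 : r ≤ n - 1)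
    (K : Fin n → Set (List α))
    (hInj : Function.Injective K)
    (hquot : ∀ i, ∃ w, K i = leftQuot w L)
    (hall : ∀ w : List α, ∃ i, leftQuot w L = K i)
    (hclosed : ∀ (w : List α) (i : Fin n), ∃ j, leftQuot w (K i) = K j)
    (S : Finset (Fin n)) (hS : S.card = n - r)
    (A : Set (List α))
    (hA : A = (⋂ i ∈ S, K i) ∩ ⋂ i ∈ Sᶜ, (K i)ᶜ) (hAne : A.Nonempty) :
    {M : Set (List α) | ∃ w : List α, M = leftQuot w A}.Finite ∧
      {M : Set (List α) | ∃ w : List α, M = leftQuot w A}.ncard ≤ f n r :=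
  atom_complexity_upper_bound_general n r hr1 hr2 K hclosed S hS A hA
end

section
/- Let N be a nondeterministic finite automaton with no empty states (every state accepts some word) whose reverse N^R is deterministic. Then the subset-construction determinization N^D of N is a minimal DFA, i.e., all its reachable states have pairwise distinct right languages. -/
/-! Because the reverse automaton is deterministic, a run of `N` on a word is determined by its
last state, so a word leading from `q` to the unique accepting state leads there from no other
state. Such a word exists for every `q` since no state is empty; then `q ∈ S` exactly when the
word is accepted from `S`, so every set of states is recovered from its right language. -/

namespace NFA

variable {α σ : Type*} (M : NFA α σ)

theorem toDFA_acceptsFrom (S : Set σ) : M.toDFA.acceptsFrom S = M.acceptsFrom S := by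
  ext x
  exact ⟨fun ⟨s, hs, ha⟩ => ⟨s, ha, hs⟩, fun ⟨s, ha, hs⟩ => ⟨s, hs, ha⟩⟩

variable {M}

theorem eq_of_mem_evalFrom_singleton (hrev : ∀ s a, (M.reverse.step s a).Subsingleton)
    {p q s : σ} {x : List α} (hp : s ∈ M.evalFrom {p} x) (hq : s ∈ M.evalFrom {q} x) :
    p = q := by
  induction x using List.reverseRecOn generalizing s with
  | nil => exact hp.symm.trans hq
  | append_singleton x a ih =>
    simp only [evalFrom_append, evalFrom_singleton, mem_stepSet] at hp hq
    obtain ⟨t, ht, hst⟩ := hp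
    obtain ⟨t', ht', hst'⟩ := hq
    obtain rfl : t = t' := hrev s a hst hst'
    exact ih ht ht'

theorem mem_iff_mem_acceptsFrom (hrev : ∀ s a, (M.reverse.step s a).Subsingleton)
    (hacc : M.accept.Subsingleton) {q : σ} {x : List α} (hx : x ∈ M.acceptsFrom {q})
    (S : Set σ) : q ∈ S ↔ x ∈ M.acceptsFrom S := by
  obtain ⟨f, hf, hqf⟩ := hx
  refine ⟨fun hq => ⟨f, hf, mem_evalFrom_iff_exists.2 ⟨q, hq, hqf⟩⟩, ?_⟩
  rintro ⟨f', hf', hSf'⟩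
  obtain rfl : f' = f := hacc hf' hf
  obtain ⟨p, hp, hpf⟩ := mem_evalFrom_iff_exists.1 hSf'
  rwa [eq_of_mem_evalFrom_singleton hrev hqf hpf]

theorem acceptsFrom_injective (hrev : ∀ s a, (M.reverse.step s a).Subsingleton)
    (hacc : M.accept.Subsingleton) (hne : ∀ q, (M.acceptsFrom {q}).Nonempty) :
    Function.Injective M.acceptsFrom := by
  intro S T h
  ext q
  obtain ⟨x, hx⟩ := hne q
  rw [mem_iff_mem_acceptsFrom hrev hacc hx, mem_iff_mem_acceptsFrom hrev hacc hx, h]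

end NFA

theorem brzozowski_determinization {α σ : Type*} (N : NFA α σ)
    (hnonempty : ∀ q : σ, ∃ w : List α, (N.evalFrom {q} w ∩ N.accept).Nonempty)
    (hrevdet_accept : ∃ f : σ, N.accept = {f})
    (hrevdet_step : ∀ (q : σ) (a : α) (p₁ p₂ : σ),
      q ∈ N.step p₁ a → q ∈ N.step p₂ a → p₁ = p₂) :
    ∀ S₁ S₂ : Set σ, (∃ w : List α, N.toDFA.eval w = S₁) → (∃ w : List α, N.toDFA.eval w = S₂) →
      (∀ w : List α, N.toDFA.evalFrom S₁ w ∈ N.toDFA.accept ↔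
        N.toDFA.evalFrom S₂ w ∈ N.toDFA.accept) → S₁ = S₂ := by
  intro S₁ S₂ _ _ hlang
  obtain ⟨f, hf⟩ := hrevdet_accept
  have hrev : ∀ q a, (N.reverse.step q a).Subsingleton :=
    fun q a p₁ h₁ p₂ h₂ => hrevdet_step q a p₁ p₂ h₁ h₂
  have hne : ∀ q, (N.acceptsFrom {q}).Nonempty := fun q => by
    obtain ⟨w, s, hs, hsa⟩ := hnonempty q
    exact ⟨w, s, hsa, hs⟩
  apply NFA.acceptsFrom_injective hrev (hf ▸ Set.subsingleton_singleton) hne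
  rw [← N.toDFA_acceptsFrom, ← N.toDFA_acceptsFrom]
  exact Set.ext hlang
end
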